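/- Let G = G₀ *_H G₁ be a nondegenerate free product with amalgamation. Then K₀ = {e} if and only if K₁ = {e}. Moreover, if K₀ = ker G then K₀ = K₁, and likewise if K₁ = ker G then K₀ = K₁. -/

import Mathlib

variable {G : Type*} [Group G]

/-- `AltWord G₀ G₁ H j w`: the list `w` is an alternating word whose `i`-th letter lies in
`G_{(i+j) mod 2} \ H`. -/
def AltWord (G₀ G₁ H : Subgroup G) (j : ℕ) (w : List G) : Prop :=
  ∀ (i : ℕ) (hi : i < w.length),
    w.get ⟨i, hi⟩ ∈ (if (i + j) % 2 = 0 then (G₀ : Set G) else (G₁ : Set G)) \ (H : Set G)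

/-- `G` is the free product of its subgroups `G₀` and `G₁` amalgamated over their common
subgroup `H` (internal characterization: `G₀ ∩ G₁ = H`, the subgroups `G₀` and `G₁` generate
`G`, and no nonempty alternating word with letters in `G₀ \ H` and `G₁ \ H` has product
in `H`). -/
structure IsAmalgam (G₀ G₁ H : Subgroup G) : Prop where
  le_left : H ≤ G₀
  le_right : H ≤ G₁
  inf_eq : G₀ ⊓ G₁ = H
  closure_eq_top : Subgroup.closure ((G₀ : Set G) ∪ (G₁ : Set G)) = ⊤
  reduced : ∀ (j : ℕ) (w : List G), w ≠ [] → AltWord G₀ G₁ H j w → w.prod ∉ H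

/-- The amalgam `G₀ *_H G₁` is *nondegenerate*: `([G₀ : H] − 1) · ([G₁ : H] − 1) ≥ 2`,
i.e. `H` is a proper subgroup of both `G₀` and `G₁`, and has index at least `3` (possibly
infinite) in at least one of them. -/
def Nondegenerate (G₀ G₁ H : Subgroup G) : Prop :=
  H.relIndex G₀ ≠ 1 ∧ H.relIndex G₁ ≠ 1 ∧ ¬(H.relIndex G₀ = 2 ∧ H.relIndex G₁ = 2)

/-- `T_{j,k}`: the set of elements of `G` that are products of alternating words of length
`k` whose first letter lies in `G_j \ H`; by convention `T_{j,0} = H`. -/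
def TT (G₀ G₁ H : Subgroup G) (j k : ℕ) : Set G :=
  if k = 0 then (H : Set G)
  else {g | ∃ w : List G, w.length = k ∧ AltWord G₀ G₁ H j w ∧ w.prod = g}

/-- `C_{j,k} = ⋂_{g ∈ T_{j,k}} g H g⁻¹`. -/
def CC (G₀ G₁ H : Subgroup G) (j k : ℕ) : Set G :=
  ⋂ g ∈ TT G₀ G₁ H j k, {x | g⁻¹ * x * g ∈ H}

/-- `K_j = ⋂_{k ≥ 0} C_{j,k}`. -/
def KK (G₀ G₁ H : Subgroup G) (j : ℕ) : Set G :=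
  ⋂ k : ℕ, CC G₀ G₁ H j k

/-- The kernel of the amalgam, `ker G = ⋂_{g ∈ G} g H g⁻¹`, as a set. -/
def amalgamKerSet (H : Subgroup G) : Set G :=
  ⋂ g : G, {x | g⁻¹ * x * g ∈ H}


/-!
Conjugation by a letter `c ∈ G_j \ H` maps `K_j` into `K_{j+1}`, because prefixing `c⁻¹` turns a
word of `T_{j+1,k}` into a word of `T_{j,k+1}`. Nondegeneracy provides such letters on both
sides, and `ker G`, being normal and contained in both `K_j`, is fixed by the conjugation.
-/

namespace AmalgamKernel

def factor (G₀ G₁ : Subgroup G) (j : ℕ) : Subgroup G :=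
  if j % 2 = 0 then G₀ else G₁

variable {G₀ G₁ H : Subgroup G}

lemma altWord_iff {j : ℕ} {w : List G} :
    AltWord G₀ G₁ H j w ↔
      ∀ (i : ℕ) (hi : i < w.length), w[i] ∈ factor G₀ G₁ (i + j) ∧ w[i] ∉ H := by
  unfold AltWord factor
  refine forall₂_congr fun i hi => ?_
  split_ifs <;> rfl

lemma altWord_cons_iff {j : ℕ} {c : G} {w : List G} :
    AltWord G₀ G₁ H j (c :: w) ↔
      (c ∈ factor G₀ G₁ j ∧ c ∉ H) ∧ AltWord G₀ G₁ H (j + 1) w := by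
  simp only [altWord_iff, List.length_cons]
  constructor
  · intro h
    refine ⟨by simpa using h 0 (by simp), fun i hi => ?_⟩
    have hi' := h (i + 1) (Nat.succ_lt_succ hi)
    rwa [List.getElem_cons_succ, show i + 1 + j = i + (j + 1) by omega] at hi'
  · rintro ⟨hc, hw⟩ (_ | i) hi
    · simpa using hc
    · simpa [show i + 1 + j = i + (j + 1) by omega] using hw i (by omega)

lemma altWord_add_two {j : ℕ} {w : List G} :
    AltWord G₀ G₁ H (j + 2) w ↔ AltWord G₀ G₁ H j w := by
  simp only [altWord_iff, factor, ← add_assoc, Nat.add_mod_right]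

lemma KK_add_two (j : ℕ) : KK G₀ G₁ H (j + 2) = KK G₀ G₁ H j := by
  simp only [KK, CC, TT, altWord_add_two]

lemma mul_mem_TT_succ {j k : ℕ} {c t : G} (hH : H ≤ factor G₀ G₁ j)
    (hc : c ∈ factor G₀ G₁ j) (hcH : c ∉ H) (ht : t ∈ TT G₀ G₁ H (j + 1) k) :
    c * t ∈ TT G₀ G₁ H j (k + 1) := by
  rw [TT, if_neg k.succ_ne_zero]
  rcases k with _ | k
  · have htH : t ∈ H := by simpa [TT] using ht
    refine ⟨[c * t], rfl, altWord_cons_iff.mpr ⟨⟨mul_mem hc (hH htH), ?_⟩, ?_⟩, by simp⟩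
    · exact fun hctH => hcH (by simpa using mul_mem hctH (inv_mem htH))
    · simp [altWord_iff]
  · rw [TT, if_neg k.succ_ne_zero] at ht
    obtain ⟨w, hlen, hw, rfl⟩ := ht
    exact ⟨c :: w, by simp [hlen], altWord_cons_iff.mpr ⟨⟨hc, hcH⟩, hw⟩, List.prod_cons⟩

lemma conj_mem_KK_succ {j : ℕ} {c x : G} (hH : H ≤ factor G₀ G₁ j)
    (hc : c ∈ factor G₀ G₁ j) (hcH : c ∉ H) (hx : x ∈ KK G₀ G₁ H j) :
    c * x * c⁻¹ ∈ KK G₀ G₁ H (j + 1) := by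
  simp only [KK, CC, Set.mem_iInter, Set.mem_ofPred_eq] at hx ⊢
  intro k t ht
  have hct : c⁻¹ * t ∈ TT G₀ G₁ H j (k + 1) :=
    mul_mem_TT_succ hH (inv_mem hc) (fun h => hcH (by simpa using inv_mem h)) ht
  simpa [mul_assoc] using hx (k + 1) (c⁻¹ * t) hct

lemma one_mem_KK (j : ℕ) : (1 : G) ∈ KK G₀ G₁ H j := by
  simp [KK, CC, one_mem]

lemma amalgamKerSet_eq_normalCore : amalgamKerSet H = H.normalCore := by
  ext x
  simp only [amalgamKerSet, Set.mem_iInter, Set.mem_ofPred_eq, SetLike.mem_coe]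
  exact ⟨fun h b => by simpa using h b⁻¹, fun h g => by simpa using h g⁻¹⟩

lemma amalgamKerSet_subset_KK (j : ℕ) : amalgamKerSet H ⊆ KK G₀ G₁ H j := by
  intro x hx
  simp only [amalgamKerSet, KK, CC, Set.mem_iInter] at hx ⊢
  exact fun _ t _ => hx t

lemma KK_eq_singleton_one_of_succ {j : ℕ} {c : G} (hH : H ≤ factor G₀ G₁ j)
    (hc : c ∈ factor G₀ G₁ j) (hcH : c ∉ H) (h : KK G₀ G₁ H (j + 1) = {1}) :
    KK G₀ G₁ H j = {1} := by
  refine Set.Subset.antisymm (fun x hx => ?_) (Set.singleton_subset_iff.mpr (one_mem_KK j))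
  have hconj := conj_mem_KK_succ hH hc hcH hx
  rwa [h, Set.mem_singleton_iff, conj_eq_one_iff] at hconj

lemma KK_eq_succ_of_succ_eq_amalgamKerSet {j : ℕ} {c : G} (hH : H ≤ factor G₀ G₁ j)
    (hc : c ∈ factor G₀ G₁ j) (hcH : c ∉ H) (h : KK G₀ G₁ H (j + 1) = amalgamKerSet H) :
    KK G₀ G₁ H j = KK G₀ G₁ H (j + 1) := by
  refine Set.Subset.antisymm (fun x hx => ?_) (h ▸ amalgamKerSet_subset_KK j)
  have hconj := conj_mem_KK_succ hH hc hcH hx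
  rw [h, amalgamKerSet_eq_normalCore] at hconj ⊢
  simpa [mul_assoc] using H.normalCore_normal.conj_mem' _ hconj c

end AmalgamKernel

open AmalgamKernel in
/-- Let `G = G₀ *_H G₁` be a nondegenerate free product with amalgamation. Then
`K₀ = {e}` if and only if `K₁ = {e}`. Moreover, if `K₀ = ker G` then `K₀ = K₁`, and
likewise if `K₁ = ker G` then `K₀ = K₁`. -/
theorem K_triviality_and_ker {G : Type*} [Group G] (G₀ G₁ H : Subgroup G)
    (ha : IsAmalgam G₀ G₁ H) (hnd : Nondegenerate G₀ G₁ H) :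
    (KK G₀ G₁ H 0 = {1} ↔ KK G₀ G₁ H 1 = {1}) ∧
    (KK G₀ G₁ H 0 = amalgamKerSet H → KK G₀ G₁ H 0 = KK G₀ G₁ H 1) ∧
    (KK G₀ G₁ H 1 = amalgamKerSet H → KK G₀ G₁ H 0 = KK G₀ G₁ H 1) := by
  obtain ⟨a, ha₀, haH⟩ := SetLike.not_le_iff_exists.mp (mt Subgroup.relIndex_eq_one.mpr hnd.1)
  obtain ⟨b, hb₁, hbH⟩ := SetLike.not_le_iff_exists.mp (mt Subgroup.relIndex_eq_one.mpr hnd.2.1)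
  have hH₀ : H ≤ factor G₀ G₁ 0 := ha.le_left
  have hH₁ : H ≤ factor G₀ G₁ 1 := ha.le_right
  have KK_two : KK G₀ G₁ H (1 + 1) = KK G₀ G₁ H 0 := KK_add_two 0
  refine ⟨⟨fun h₀ => ?_, KK_eq_singleton_one_of_succ hH₀ ha₀ haH⟩, fun h₀ => ?_,
    fun h₁ => KK_eq_succ_of_succ_eq_amalgamKerSet hH₀ ha₀ haH h₁⟩
  · exact KK_eq_singleton_one_of_succ hH₁ hb₁ hbH (KK_two ▸ h₀)
  · rw [← KK_two] at h₀ ⊢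
    exact (KK_eq_succ_of_succ_eq_amalgamKerSet hH₁ hb₁ hbH h₀).symm
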